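/- Let k ≥ 1 and let E be a finite R-labelled directed graph without loops of length strictly less than k, such that s(E¹) ∪ t(E¹) = E⁰ ≠ ∅, and such that E satisfies the Chirvasitu Property for k-paths (every two edges of E belong to a common path of length k). Then E is either the graph underlying a path (e₁,…,e_k) of length k whose targets t(e₁),…,t(e_k) are pairwise distinct, or the graph underlying a loop (f₁,…,f_m) with k ≤ m ≤ 2k − 1 whose targets t(f₁),…,t(f_m) are pairwise distinct. -/
import Mathlib


/-- An `R`-labelled directed graph: vertices, edges, source/target maps and a label map. -/
structure LGraph (R : Type) where
  V : Type
  E : Type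
  s : E → V
  t : E → V
  l : E → R

namespace LGraph

variable {R : Type}

/-- `p = (e₁, …, e_k)` is a path of length `k`: `t eᵢ = s eᵢ₊₁` for `1 ≤ i < k`. -/
def IsPath (G : LGraph R) {k : ℕ} (p : Fin k → G.E) : Prop :=
  ∀ (i : ℕ) (hi : i + 1 < k), G.t (p ⟨i, by omega⟩) = G.s (p ⟨i + 1, hi⟩)

/-- A loop is a (nonempty) path whose source equals its target. -/
def IsLoop (G : LGraph R) {k : ℕ} (p : Fin k → G.E) : Prop :=
  G.IsPath p ∧ ∃ hk : 0 < k, G.s (p ⟨0, hk⟩) = G.t (p ⟨k - 1, by omega⟩)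

/-- No repeated edges: edges are determined by their source and target. -/
def NoRepeats (G : LGraph R) : Prop :=
  ∀ e f : G.E, G.s e = G.s f → G.t e = G.t f → e = f

/-- The weight of a labelled graph: the sum of all labels. -/
noncomputable def wt [CommSemiring R] (G : LGraph R) : R :=
  ∑ᶠ e : G.E, G.l e

/-- The `k`-content of a labelled graph: the sum, over all paths `p` of length `k`,
of the product of the labels of the edges of `p`. -/
noncomputable def ct [CommSemiring R] (G : LGraph R) (k : ℕ) : R :=
  ∑ᶠ p : {p : Fin k → G.E // G.IsPath p}, ∏ i, G.l (p.1 i)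

/-- The Chirvasitu property for `k`-paths: every two edges belong to a common
path of length `k`. -/
def Chirvasitu (G : LGraph R) (k : ℕ) : Prop :=
  ∀ e f : G.E, ∃ p : Fin k → G.E, G.IsPath p ∧ (∃ i, p i = e) ∧ (∃ i, p i = f)

end LGraph

namespace ChirAux

open LGraph

variable {R : Type} {G : LGraph R} {k : ℕ}

lemma pcongr {n : ℕ} (p : Fin n → G.E) (a b : ℕ) (ha : a < n) (hb : b < n) (h : a = b) :
    p ⟨a, ha⟩ = p ⟨b, hb⟩ := by subst h; rfl

lemma no_s_eq (hnl : ∀ (m : ℕ) (q : Fin m → G.E), m < k → ¬ G.IsLoop q)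
    {n : ℕ} {p : Fin n → G.E} (hp : G.IsPath p) {i j : ℕ} (hij : i < j) (hj : j < n)
    (hjk : j - i < k) (h : G.s (p ⟨i, by omega⟩) = G.s (p ⟨j, hj⟩)) : False := by
  refine hnl (j - i) (fun b : Fin (j - i) => p ⟨i + b.1, by omega⟩) hjk
    ⟨fun a ha => hp (i + a) (by omega), by omega, ?_⟩
  show G.s (p ⟨i + 0, by omega⟩) = G.t (p ⟨i + (j - i - 1), by omega⟩)
  have h1 := hp (j - 1) (by omega)
  calc G.s (p ⟨i + 0, by omega⟩)
      = G.s (p ⟨i, by omega⟩) := congrArg G.s (pcongr p _ _ (by omega) (by omega) (by omega))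
    _ = G.s (p ⟨j, hj⟩) := h
    _ = G.s (p ⟨j - 1 + 1, by omega⟩) :=
        congrArg G.s (pcongr p _ _ hj (by omega) (by omega))
    _ = G.t (p ⟨j - 1, by omega⟩) := h1.symm
    _ = G.t (p ⟨i + (j - i - 1), by omega⟩) :=
        congrArg G.t (pcongr p _ _ (by omega) (by omega) (by omega))

lemma no_t_eq (hnl : ∀ (m : ℕ) (q : Fin m → G.E), m < k → ¬ G.IsLoop q)
    {n : ℕ} {p : Fin n → G.E} (hp : G.IsPath p) {i j : ℕ} (hij : i < j) (hj : j < n)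
    (hjk : j - i < k) (h : G.t (p ⟨i, by omega⟩) = G.t (p ⟨j, hj⟩)) : False := by
  refine hnl (j - i) (fun b : Fin (j - i) => p ⟨i + 1 + b.1, by omega⟩) hjk
    ⟨fun a ha => hp (i + 1 + a) (by omega), by omega, ?_⟩
  show G.s (p ⟨i + 1 + 0, by omega⟩) = G.t (p ⟨i + 1 + (j - i - 1), by omega⟩)
  have h1 := hp i (by omega)
  calc G.s (p ⟨i + 1 + 0, by omega⟩)
      = G.s (p ⟨i + 1, by omega⟩) := congrArg G.s (pcongr p _ _ (by omega) (by omega) (by omega))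
    _ = G.t (p ⟨i, by omega⟩) := h1.symm
    _ = G.t (p ⟨j, hj⟩) := h
    _ = G.t (p ⟨i + 1 + (j - i - 1), by omega⟩) :=
        congrArg G.t (pcongr p _ _ hj (by omega) (by omega))

lemma out_unique (hch : G.Chirvasitu k)
    (hnl : ∀ (m : ℕ) (q : Fin m → G.E), m < k → ¬ G.IsLoop q)
    (e f : G.E) (h : G.s e = G.s f) : e = f := by
  obtain ⟨p, hp, ⟨i, hi⟩, ⟨j, hj⟩⟩ := hch e f
  rcases lt_trichotomy i.1 j.1 with hij | hij | hij
  · exact absurd h (fun h => no_s_eq hnl hp hij j.2 (by omega)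
      (by rw [show (⟨i.1, by omega⟩ : Fin k) = i from rfl, show (⟨j.1, j.2⟩ : Fin k) = j from rfl,
        hi, hj]; exact h))
  · rw [← hi, ← hj]; exact congrArg p (Fin.ext hij)
  · exact absurd h (fun h => no_s_eq hnl hp hij i.2 (by omega)
      (by rw [show (⟨j.1, by omega⟩ : Fin k) = j from rfl, show (⟨i.1, i.2⟩ : Fin k) = i from rfl,
        hi, hj]; exact h.symm))

lemma in_unique (hch : G.Chirvasitu k)
    (hnl : ∀ (m : ℕ) (q : Fin m → G.E), m < k → ¬ G.IsLoop q)
    (e f : G.E) (h : G.t e = G.t f) : e = f := by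
  obtain ⟨p, hp, ⟨i, hi⟩, ⟨j, hj⟩⟩ := hch e f
  rcases lt_trichotomy i.1 j.1 with hij | hij | hij
  · exact absurd h (fun h => no_t_eq hnl hp hij j.2 (by omega)
      (by rw [show (⟨i.1, by omega⟩ : Fin k) = i from rfl, show (⟨j.1, j.2⟩ : Fin k) = j from rfl,
        hi, hj]; exact h))
  · rw [← hi, ← hj]; exact congrArg p (Fin.ext hij)
  · exact absurd h (fun h => no_t_eq hnl hp hij i.2 (by omega)
      (by rw [show (⟨j.1, by omega⟩ : Fin k) = j from rfl, show (⟨i.1, i.2⟩ : Fin k) = i from rfl,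
        hi, hj]; exact h.symm))

/-- In a `k`-path, targets are pairwise distinct. -/
lemma ktinj (hnl : ∀ (m : ℕ) (q : Fin m → G.E), m < k → ¬ G.IsLoop q)
    {p : Fin k → G.E} (hp : G.IsPath p) :
    Function.Injective (fun i : Fin k => G.t (p i)) := by
  intro a b h
  rcases lt_trichotomy a.1 b.1 with hab | hab | hab
  · exact absurd h (fun h => no_t_eq hnl hp hab b.2 (by omega)
      (by rw [show (⟨a.1, by omega⟩ : Fin k) = a from rfl, show (⟨b.1, b.2⟩ : Fin k) = b from rfl]
          exact h))
  · exact Fin.ext hab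
  · exact absurd h (fun h => no_t_eq hnl hp hab a.2 (by omega)
      (by rw [show (⟨b.1, by omega⟩ : Fin k) = b from rfl, show (⟨a.1, a.2⟩ : Fin k) = a from rfl]
          exact h.symm))

/-- If `e₀` has no follower, it can only appear at the last position of a path. -/
lemma last_idx {e₀ : G.E} (hA : ∀ f, G.s f ≠ G.t e₀)
    {p : Fin k → G.E} (hp : G.IsPath p) (i : Fin k) (h : p i = e₀) : i.1 = k - 1 := by
  by_contra hne
  have hi : i.1 + 1 < k := by omega
  have := hp i.1 hi
  rw [show (⟨i.1, by omega⟩ : Fin k) = i from rfl, h] at this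
  exact hA (p ⟨i.1 + 1, hi⟩) this.symm

/-- Two `k`-paths with equal last edges are equal (using uniqueness of predecessors). -/
lemma back_eq (ui : ∀ e f : G.E, G.t e = G.t f → e = f) (hk : 1 ≤ k)
    {p q : Fin k → G.E} (hp : G.IsPath p) (hq : G.IsPath q)
    (hlast : p ⟨k - 1, by omega⟩ = q ⟨k - 1, by omega⟩) : ∀ a : Fin k, p a = q a := by
  have key : ∀ d : ℕ, d < k → p ⟨k - 1 - d, by omega⟩ = q ⟨k - 1 - d, by omega⟩ := by
    intro d
    induction d with
    | zero => intro _; exact hlast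
    | succ d ih =>
      intro hd
      have ihd := ih (by omega)
      have h1 := hp (k - 1 - (d + 1)) (by omega)
      have h2 := hq (k - 1 - (d + 1)) (by omega)
      have hidx : k - 1 - (d + 1) + 1 = k - 1 - d := by omega
      apply ui
      rw [h1, h2, pcongr p _ _ (by omega) (by omega) hidx, pcongr q _ _ (by omega) (by omega) hidx,
        ihd]
  intro a
  have := key (k - 1 - a.1) (by omega)
  rw [pcongr p _ _ (by omega) a.2 (by omega), pcongr q _ _ (by omega) a.2 (by omega)] at this
  exact this

/-- Along a path, each edge is followed by `succ` of it. -/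
lemma path_iter (uo : ∀ e f : G.E, G.s e = G.s f → e = f)
    (succ : G.E → G.E) (hs : ∀ e, G.s (succ e) = G.t e)
    {n : ℕ} {p : Fin n → G.E} (hp : G.IsPath p) :
    ∀ (t a : ℕ) (h : a + t < n), p ⟨a + t, h⟩ = succ^[t] (p ⟨a, by omega⟩) := by
  intro t
  induction t with
  | zero => intro a h; rfl
  | succ t ih =>
    intro a h
    have h1 : p ⟨a + t + 1, h⟩ = succ (p ⟨a + t, by omega⟩) := by
      apply uo
      rw [hs, (hp (a + t) h).symm]
    rw [show (⟨a + (t + 1), h⟩ : Fin n) = ⟨a + t + 1, h⟩ from rfl, h1, ih a (by omega)]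
    exact (Function.iterate_succ_apply' succ t _).symm

end ChirAux




/-- (Lemma 3.2.) A finite `R`-labelled directed graph without loops of
length `< k`, with `s(E¹) ∪ t(E¹) = E⁰ ≠ ∅`, satisfying the Chirvasitu property for
`k`-paths, is either the graph underlying a path `(e₁,…,e_k)` of length `k` with pairwise
distinct targets, or the graph underlying a loop `(f₁,…,f_m)` with `k ≤ m ≤ 2k - 1` and
pairwise distinct targets. -/
theorem chirvasitu_no_short_loops (k : ℕ) (hk : 1 ≤ k)
    {R : Type} [CommSemiring R]
    (G : LGraph R) [Finite G.V] [Finite G.E]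
    (hne : ∀ e, G.l e ≠ 0) (hnr : G.NoRepeats)
    (hnl : ∀ (m : ℕ) (q : Fin m → G.E), m < k → ¬ G.IsLoop q)
    (hVcov : ∀ v : G.V, ∃ e : G.E, G.s e = v ∨ G.t e = v)
    (hVne : Nonempty G.V)
    (hch : G.Chirvasitu k) :
    (∃ p : Fin k → G.E, G.IsPath p ∧ Function.Bijective p ∧
      Function.Injective fun i => G.t (p i)) ∨
    (∃ m : ℕ, k ≤ m ∧ m ≤ 2 * k - 1 ∧ ∃ q : Fin m → G.E,
      G.IsLoop q ∧ Function.Bijective q ∧ Function.Injective fun i => G.t (q i)) := by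
  classical
  obtain ⟨v⟩ := hVne
  obtain ⟨e₀', he₀'⟩ := hVcov v
  have uo := ChirAux.out_unique hch hnl
  have ui := ChirAux.in_unique hch hnl
  by_cases hA : ∃ e₀ : G.E, ∀ f, G.s f ≠ G.t e₀
  · obtain ⟨e₀, he₀⟩ := hA
    left
    obtain ⟨p, hp, ⟨i, hi⟩, -⟩ := hch e₀ e₀
    have hik : i.1 = k - 1 := ChirAux.last_idx he₀ hp i hi
    have hplast : p ⟨k - 1, by omega⟩ = e₀ := by
      rw [← hi]; exact congrArg p (Fin.ext hik.symm)
    have htinj := ChirAux.ktinj hnl hp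
    refine ⟨p, hp, ⟨fun a b hab => htinj (congrArg G.t hab), ?_⟩, htinj⟩
    intro f
    obtain ⟨q, hq, ⟨i', hi'⟩, ⟨j, hjf⟩⟩ := hch e₀ f
    have hqlast : q ⟨k - 1, by omega⟩ = e₀ := by
      rw [← hi']
      exact congrArg q (Fin.ext (ChirAux.last_idx he₀ hq i' hi').symm)
    have hpq := ChirAux.back_eq ui hk hp hq (hplast.trans hqlast.symm)
    exact ⟨j, (hpq j).trans hjf⟩
  · push_neg at hA
    right
    set succ : G.E → G.E := fun e => Classical.choose (hA e) with hsucc_def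
    have hs : ∀ e, G.s (succ e) = G.t e := fun e => Classical.choose_spec (hA e)
    have succ_inj : Function.Injective succ := fun e f h =>
      ui e f (by rw [← hs e, ← hs f, h])
    have cancel : ∀ (a b : ℕ) (x : G.E), a ≤ b → succ^[a] x = succ^[b] x →
        succ^[b - a] x = x := by
      intro a b x hab h
      apply Function.Injective.iterate succ_inj a
      rw [← Function.iterate_add_apply, show a + (b - a) = b from by omega]
      exact h.symm
    have hper : ∃ d, 0 < d ∧ succ^[d] e₀' = e₀' := by
      obtain ⟨a, b, hab, h⟩ := Finite.exists_ne_map_eq_of_infinite (fun a : ℕ => succ^[a] e₀')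
      rcases Nat.lt_or_ge a b with h' | h'
      · exact ⟨b - a, by omega, cancel a b e₀' (le_of_lt h') h⟩
      · exact ⟨a - b, by omega, cancel b a e₀' (by omega) h.symm⟩
    set m := Nat.find hper with hm_def
    obtain ⟨hm0, hmloop⟩ := Nat.find_spec hper
    have hmin : ∀ d, 0 < d → succ^[d] e₀' = e₀' → m ≤ d := fun d h1 h2 =>
      Nat.find_min' hper ⟨h1, h2⟩
    have iter_mul : ∀ t, succ^[m * t] e₀' = e₀' := by
      intro t
      induction t with
      | zero => rfl
      | succ t ih =>
        rw [Nat.mul_succ, Function.iterate_add_apply, hmloop]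
        exact ih
    have iter_mod : ∀ x : ℕ, succ^[x] e₀' = succ^[x % m] e₀' := by
      intro x
      conv_lhs => rw [show x = x % m + m * (x / m) from (Nat.mod_add_div x m).symm]
      rw [Function.iterate_add_apply, iter_mul]
    set q : Fin m → G.E := fun a => succ^[a.1] e₀' with hq_def
    have hqpath : G.IsPath q := by
      intro a ha
      show G.t (succ^[a] e₀') = G.s (succ^[a + 1] e₀')
      rw [Function.iterate_succ_apply' succ a e₀', hs]
    have hm1 : succ^[m] e₀' = succ (succ^[m - 1] e₀') := by
      have h := Function.iterate_succ_apply' succ (m - 1) e₀'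
      rw [show (m - 1).succ = m from by omega] at h
      exact h
    have hqloop : G.IsLoop q := by
      refine ⟨hqpath, hm0, ?_⟩
      show G.s (succ^[0] e₀') = G.t (succ^[m - 1] e₀')
      show G.s e₀' = G.t (succ^[m - 1] e₀')
      rw [← hs, ← hm1, hmloop]
    have hkm : k ≤ m := le_of_not_gt (fun h => hnl m q h hqloop)
    -- m ≤ 2k - 1
    have hm2k : m ≤ 2 * k - 1 := by
      obtain ⟨p, hp, ⟨i, hi⟩, ⟨j, hj⟩⟩ := hch e₀' (succ^[k] e₀')
      have hpi := ChirAux.path_iter uo succ hs hp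
      rcases le_or_gt i.1 j.1 with hij | hij
      · have h1 : succ^[k] e₀' = succ^[j.1 - i.1] e₀' := by
          rw [← hj, ← hi]
          calc p j = p ⟨i.1 + (j.1 - i.1), by omega⟩ :=
              congrArg p (Fin.ext (show j.1 = i.1 + (j.1 - i.1) by omega))
            _ = succ^[j.1 - i.1] (p ⟨i.1, by omega⟩) := hpi _ _ (by omega)
            _ = succ^[j.1 - i.1] (p i) := rfl
        have hd := cancel (j.1 - i.1) k e₀' (by omega) h1.symm
        have := hmin _ (by omega : 0 < k - (j.1 - i.1)) hd
        omega
      · have h1 : e₀' = succ^[(i.1 - j.1) + k] e₀' := by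
          rw [Function.iterate_add_apply, ← hj, ← hi]
          calc p i = p ⟨j.1 + (i.1 - j.1), by omega⟩ :=
              congrArg p (Fin.ext (show i.1 = j.1 + (i.1 - j.1) by omega))
            _ = succ^[i.1 - j.1] (p ⟨j.1, by omega⟩) := hpi _ _ (by omega)
            _ = succ^[i.1 - j.1] (p j) := rfl
        have := hmin _ (by omega) h1.symm
        omega
    -- surjectivity of the orbit
    have orbit : ∀ f : G.E, ∃ c : ℕ, c < m ∧ succ^[c] e₀' = f := by
      intro f
      obtain ⟨p, hp, ⟨i, hi⟩, ⟨j, hjf⟩⟩ := hch e₀' f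
      have hpi := ChirAux.path_iter uo succ hs hp
      rcases le_or_gt i.1 j.1 with hij | hij
      · have h1 : f = succ^[j.1 - i.1] e₀' := by
          rw [← hjf, ← hi]
          calc p j = p ⟨i.1 + (j.1 - i.1), by omega⟩ :=
              congrArg p (Fin.ext (show j.1 = i.1 + (j.1 - i.1) by omega))
            _ = succ^[j.1 - i.1] (p ⟨i.1, by omega⟩) := hpi _ _ (by omega)
            _ = succ^[j.1 - i.1] (p i) := rfl
        exact ⟨(j.1 - i.1) % m, Nat.mod_lt _ hm0, by rw [← iter_mod]; exact h1.symm⟩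
      · have h1 : e₀' = succ^[i.1 - j.1] f := by
          rw [← hjf, ← hi]
          calc p i = p ⟨j.1 + (i.1 - j.1), by omega⟩ :=
              congrArg p (Fin.ext (show i.1 = j.1 + (i.1 - j.1) by omega))
            _ = succ^[i.1 - j.1] (p ⟨j.1, by omega⟩) := hpi _ _ (by omega)
            _ = succ^[i.1 - j.1] (p j) := rfl
        set d := i.1 - j.1 with hd_def
        have hd0 : 0 < d := by omega
        have h2 : succ^[d] (succ^[m * d - d] e₀') = succ^[d] f := by
          rw [← Function.iterate_add_apply, show d + (m * d - d) = m * d from by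
            have : d ≤ m * d := Nat.le_mul_of_pos_left d hm0
            omega, iter_mul, h1]
        have h3 : succ^[m * d - d] e₀' = f := Function.Injective.iterate succ_inj d h2
        exact ⟨(m * d - d) % m, Nat.mod_lt _ hm0, by rw [← iter_mod]; exact h3⟩
    have qsurj : Function.Surjective q := by
      intro f
      obtain ⟨c, hc, hcf⟩ := orbit f
      exact ⟨⟨c, hc⟩, hcf⟩
    have qinj : Function.Injective q := by
      intro a b h
      rcases Nat.lt_trichotomy a.1 b.1 with h' | h' | h'
      · have := cancel a.1 b.1 e₀' (le_of_lt h') h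
        have := hmin _ (by omega) this
        exact absurd this (by omega)
      · exact Fin.ext h'
      · have := cancel b.1 a.1 e₀' (le_of_lt h') h.symm
        have := hmin _ (by omega) this
        exact absurd this (by omega)
    have key : ∀ a b : Fin m, a.1 < b.1 → G.t (q a) = G.t (q b) → False := by
      intro a b hab h
      by_cases hd : b.1 - a.1 < k
      · exact ChirAux.no_t_eq hnl hqpath hab b.2 hd h
      · refine hnl (m - (b.1 - a.1))
          (fun c : Fin (m - (b.1 - a.1)) => succ^[b.1 + 1 + c.1] e₀') (by omega)
          ⟨?_, by omega, ?_⟩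
        · intro x hx
          show G.t (succ^[b.1 + 1 + x] e₀') = G.s (succ^[b.1 + 1 + x + 1] e₀')
          rw [Function.iterate_succ_apply' succ (b.1 + 1 + x) e₀', hs]
        · show G.s (succ^[b.1 + 1 + 0] e₀') = G.t (succ^[b.1 + 1 + (m - (b.1 - a.1) - 1)] e₀')
          have he : b.1 + 1 + (m - (b.1 - a.1) - 1) = a.1 + m := by
            have := b.2
            omega
          rw [he, Function.iterate_add_apply succ a.1 m e₀', hmloop]
          show G.s (succ^[b.1 + 1] e₀') = G.t (succ^[a.1] e₀')
          rw [Function.iterate_succ_apply' succ b.1 e₀', hs]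
          exact h.symm
    have qtinj : Function.Injective (fun i : Fin m => G.t (q i)) := by
      intro a b h
      rcases Nat.lt_trichotomy a.1 b.1 with h' | h' | h'
      · exact absurd (key a b h' h) (fun h => h)
      · exact Fin.ext h'
      · exact absurd (key b a h' h.symm) (fun h => h)
    exact ⟨m, hkm, hm2k, q, hqloop, ⟨qinj, qsurj⟩, qtinj⟩
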